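/- Let G be a triangle-free graph on n vertices with maximum degree at most d and independence number at most α, and let G' be its r-blowup with N = rn vertices. If d ≤ (1+o(1))√((1/2)n ln n), α ≤ (1+o(1))√(2n ln n), and r = (1/2)ln n, then i(G') ≤ e^{(1+o(1))(1+ln 2)√N·ln N}. -/

import Mathlib

open Classical Finset Real

/-- The number of independent sets of a graph (including the empty set). -/
noncomputable def numIndep {V : Type*} [Fintype V] (G : SimpleGraph V) : ℕ :=
  Nat.card {s : Finset V // ∀ u ∈ s, ∀ w ∈ s, ¬ G.Adj u w}

/-- The independence number of a graph. -/
noncomputable def indepNum {V : Type*} [Fintype V] (G : SimpleGraph V) : ℕ :=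
  sSup {m | ∃ s : Finset V, (∀ u ∈ s, ∀ w ∈ s, ¬ G.Adj u w) ∧ s.card = m}

/-- The `r`-blowup of `G`. -/
def blowup {V : Type*} (G : SimpleGraph V) (r : ℕ) : SimpleGraph (V × Fin r) where
  Adj x y := G.Adj x.1 y.1
  symm := ⟨fun _ _ h => G.symm.symm _ _ h⟩
  loopless := ⟨fun x h => G.loopless.irrefl x.1 h⟩

open Filter

/-!
Every independent set of the blowup lies inside `S × Fin r` for the independent set `S` of `G`
formed by its first coordinates, and `|S| ≤ α`; hence `i(G') ≤ i(G) 2^{rα}`. Comparing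
`∑_{k ≤ α} C(n, k)` with the exponential series gives `i(G) ≤ (en/α)^α`, so that
`log i(G') ≤ α (1 + log (n/α) + r log 2)`. This exponent increases with `α` while `α ≤ n`, so
`α` may be replaced by `A = √(2(1+ε) n log n)`; then `log (n/A) ≤ (log n)/2`, and with
`r ≈ (log n)/2` the exponent is `(1 + log 2) A (log n + 2)/2 ≤ (1+ε)(1 + log 2) √N log N`.
-/

section Counting

variable {V : Type*} [Fintype V] (G : SimpleGraph V)

lemma numIndep_eq_card :
    numIndep G = #{s : Finset V | ∀ u ∈ s, ∀ w ∈ s, ¬ G.Adj u w} := by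
  rw [numIndep, Nat.card_eq_fintype_card, Fintype.card_subtype]

variable {G} in
lemma card_le_indepNum {s : Finset V} (hs : ∀ u ∈ s, ∀ w ∈ s, ¬ G.Adj u w) :
    #s ≤ indepNum G := by
  refine le_csSup ⟨Fintype.card V, ?_⟩ ⟨s, hs, rfl⟩
  rintro _ ⟨t, -, rfl⟩
  exact card_le_univ t

lemma numIndep_le_sum_choose :
    numIndep G ≤ ∑ k ∈ range (indepNum G + 1), (Fintype.card V).choose k := by
  rw [numIndep_eq_card]
  calc #{s : Finset V | ∀ u ∈ s, ∀ w ∈ s, ¬ G.Adj u w}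
      ≤ #((range (indepNum G + 1)).biUnion fun k => powersetCard k univ) := by
        refine card_le_card fun s hs => mem_biUnion.2 ⟨#s, ?_, mem_powersetCard_univ.2 rfl⟩
        exact mem_range_succ_iff.2 (card_le_indepNum ((mem_filter_univ _).1 hs))
    _ ≤ _ := card_biUnion_le.trans_eq (by simp)

lemma numIndep_blowup_le (r : ℕ) :
    numIndep (blowup G r) ≤ numIndep G * 2 ^ (indepNum G * r) := by
  rw [numIndep_eq_card, numIndep_eq_card]
  set B : Finset (Finset V) := {s | ∀ u ∈ s, ∀ w ∈ s, ¬ G.Adj u w}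
  calc _ ≤ #(B.biUnion fun S => (S ×ˢ univ).powerset) := by
        refine card_le_card fun t ht => mem_biUnion.2 ⟨t.image Prod.fst, ?_, ?_⟩
        · simp only [B, mem_filter_univ, mem_image] at ht ⊢
          rintro _ ⟨x, hx, rfl⟩ _ ⟨y, hy, rfl⟩
          exact ht x hx y hy
        · exact mem_powerset.2 fun x hx => mem_product.2 ⟨mem_image_of_mem _ hx, mem_univ _⟩
    _ ≤ ∑ S ∈ B, 2 ^ (#S * r) := card_biUnion_le.trans_eq <| sum_congr rfl fun S _ => by
        rw [card_powerset, card_product, card_univ, Fintype.card_fin]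
    _ ≤ ∑ S ∈ B, 2 ^ (indepNum G * r) := by
        gcongr with S hS
        · exact one_le_two
        · exact card_le_indepNum ((mem_filter_univ _).1 hS)
    _ = #B * 2 ^ (indepNum G * r) := by rw [sum_const, smul_eq_mul]

end Counting

lemma sum_range_choose_le_exp {n k : ℕ} (hkn : k ≤ n) :
    ∑ j ∈ range (k + 1), (n.choose j : ℝ) ≤ exp (k * (1 + log (n / k))) := by
  rcases k.eq_zero_or_pos with rfl | hk
  · simp
  have hk' : (0 : ℝ) < k := by exact_mod_cast hk
  have hnk : (1 : ℝ) ≤ n / k := (one_le_div hk').2 (by exact_mod_cast hkn)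
  calc ∑ j ∈ range (k + 1), (n.choose j : ℝ)
      ≤ ∑ j ∈ range (k + 1), (k : ℝ) ^ j / j.factorial * (n / k) ^ j := by
        refine sum_le_sum fun j _ => (Nat.choose_le_pow_div j n).trans_eq ?_
        rw [div_mul_eq_mul_div, ← mul_pow, mul_div_cancel₀ _ hk'.ne']
    _ ≤ ∑ j ∈ range (k + 1), (k : ℝ) ^ j / j.factorial * (n / k) ^ k := by
        gcongr with j hj
        exact mem_range_succ_iff.1 hj
    _ ≤ exp k * (n / k) ^ k := by
        rw [← sum_mul]
        gcongr
        exact sum_le_exp_of_nonneg hk'.le _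
    _ = exp (k * (1 + log (n / k))) := by
        rw [mul_add, mul_one, exp_add, exp_nat_mul, exp_log (by positivity)]

lemma mul_add_log_div_le {c x A n : ℝ} (hc : 1 ≤ c) (hx : 0 ≤ x) (hxA : x ≤ A)
    (hAn : A ≤ n) :
    x * (c + log (n / x)) ≤ A * (c + log (n / A)) := by
  rcases hx.eq_or_lt with rfl | hx
  · rcases hxA.eq_or_lt with rfl | hA
    · simp
    · simpa using mul_nonneg hA.le (by linarith [log_nonneg ((one_le_div hA).2 hAn)] :
        0 ≤ c + log (n / A))
  have hA : 0 < A := hx.trans_le hxA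
  have hlog : 0 ≤ log (n / A) := log_nonneg ((one_le_div hA).2 hAn)
  have hsplit : log (n / x) = log (n / A) + log (A / x) := by
    rw [← log_mul (div_pos (hA.trans_le hAn) hA).ne' (div_pos hA hx).ne']
    field_simp
  have hAx : x * log (A / x) ≤ A - x := by
    have := mul_le_mul_of_nonneg_left (log_le_sub_one_of_pos (div_pos hA hx)) hx.le
    rwa [mul_sub, mul_div_cancel₀ _ hx.ne', mul_one] at this
  rw [hsplit]
  nlinarith

lemma numIndep_blowup_le_exp {V : Type*} [Fintype V] (G : SimpleGraph V) (r : ℕ) {A : ℝ}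
    (hα : (indepNum G : ℝ) ≤ A) (hAn : A ≤ Fintype.card V) :
    (numIndep (blowup G r) : ℝ) ≤ exp (A * (1 + r * log 2 + log (Fintype.card V / A))) := by
  set α := indepNum G
  set n := Fintype.card V
  have hαn : α ≤ n := by exact_mod_cast hα.trans hAn
  calc (numIndep (blowup G r) : ℝ)
      ≤ (∑ k ∈ range (α + 1), (n.choose k : ℝ)) * 2 ^ (α * r) := by
        have := (numIndep_blowup_le G r).trans
          (Nat.mul_le_mul_right _ (numIndep_le_sum_choose G))
        exact_mod_cast this
    _ ≤ exp (α * (1 + log (n / α))) * exp (α * r * log 2) := by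
        gcongr
        · exact sum_range_choose_le_exp hαn
        · rw [← Nat.cast_mul, exp_nat_mul, exp_log two_pos]
    _ = exp (α * (1 + r * log 2 + log (n / α))) := by rw [← exp_add]; ring_nf
    _ ≤ exp (A * (1 + r * log 2 + log (n / A))) :=
        exp_le_exp.2 (mul_add_log_div_le (le_add_of_nonneg_right (by positivity))
          (Nat.cast_nonneg _) hα hAn)

lemma log_div_le_half_log {n A : ℝ} (hn : 0 < n) (hA : 0 ≤ A) (hnA : n ≤ A ^ 2) :
    log (n / A) ≤ log n / 2 := by
  have hA : 0 < A := by nlinarith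
  have : log n ≤ 2 * log A := by
    simpa [log_pow] using log_le_log hn hnA
  rw [log_div hn.ne' hA.ne']
  linarith

lemma mul_one_add_log_div_le_sqrt_mul_log {ε n r A : ℝ} (hε : 0 < ε) (hn : 0 < n)
    (hL : 4 + 8 / ε ≤ log n) (hr : |r - 1 / 2 * log n| ≤ 1) (hA0 : 0 ≤ A)
    (hA : A ^ 2 = 2 * (1 + ε) * n * log n) :
    A * (1 + r * log 2 + log (n / A)) ≤
      (1 + ε) * (1 + log 2) * √(r * n) * log (r * n) := by
  set L := log n
  obtain ⟨hr_lo, hr_hi⟩ := abs_le.1 hr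
  have hr1 : 1 ≤ r := by nlinarith [div_pos (by norm_num : (0:ℝ) < 8) hε]
  have hlog2 : 0 < log 2 := log_pos one_lt_two
  have hL0 : 0 ≤ L := by linarith [div_pos (by norm_num : (0:ℝ) < 8) hε]
  have hεL : 4 * ε + 8 ≤ ε * L := by
    have := mul_le_mul_of_nonneg_left hL hε.le
    rwa [mul_add, mul_div_cancel₀ _ hε.ne', mul_comm] at this
  have hlogA : log (n / A) ≤ L / 2 :=
    log_div_le_half_log hn hA0 (by rw [hA]; nlinarith)
  -- `(L + 2)² ≤ (1 + ε) L (L - 2) ≤ 2 (1 + ε) r L` once `ε L ≥ 4ε + 8`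
  have hquad : (L + 2) ^ 2 ≤ 2 * (1 + ε) * r * L := by nlinarith
  have hsq : (A * (L + 2) / 2) ^ 2 ≤ ((1 + ε) * √(r * n) * L) ^ 2 := by
    rw [mul_pow, mul_pow, sq_sqrt (by positivity), div_pow, mul_pow, hA]
    have := mul_le_mul_of_nonneg_left hquad (by positivity : 0 ≤ (1 + ε) * n * L / 2)
    nlinarith
  calc A * (1 + r * log 2 + log (n / A))
      ≤ A * ((1 + log 2) * (L + 2) / 2) := by
        gcongr
        nlinarith
    _ = (1 + log 2) * (A * (L + 2) / 2) := by ring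
    _ ≤ (1 + log 2) * ((1 + ε) * √(r * n) * L) := by
        gcongr
        exact le_of_pow_le_pow_left₀ two_ne_zero (by positivity) hsq
    _ = (1 + ε) * (1 + log 2) * √(r * n) * L := by ring
    _ ≤ (1 + ε) * (1 + log 2) * √(r * n) * log (r * n) := by
        gcongr
        exact log_le_log hn (le_mul_of_one_le_left hn.le hr1)

lemma eventually_mul_log_le {c : ℝ} (hc : 0 < c) : ∀ᶠ n : ℕ in atTop, c * log n ≤ n := by
  filter_upwards [tendsto_natCast_atTop_atTop.eventually
    (isLittleO_log_id_atTop.bound (inv_pos.2 hc))] with n hn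
  rw [norm_of_nonneg (log_natCast_nonneg n), id, norm_natCast] at hn
  rwa [← le_div_iff₀' hc, div_eq_inv_mul]

/-- Let `G` be a triangle-free graph on `n` vertices with maximum degree at most
`(1+o(1))√((1/2)n ln n)` and independence number at most `(1+o(1))√(2n ln n)`, and let
`G'` be its `r`-blowup with `r = (1/2)ln n` and `N = rn` vertices. Then
`i(G') ≤ e^{(1+o(1))(1+ln 2)√N·ln N}`. -/
theorem stmt18 :
    ∀ ε > (0 : ℝ), ∃ δ > (0 : ℝ), ∃ n₀ : ℕ, ∀ n : ℕ, n₀ ≤ n →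
    ∀ G : SimpleGraph (Fin n), G.CliqueFree 3 →
    (∀ v, (Nat.card {w // G.Adj v w} : ℝ) ≤
      (1 + δ) * Real.sqrt ((1 / 2) * n * Real.log n)) →
    ((indepNum G : ℝ) ≤ (1 + δ) * Real.sqrt (2 * n * Real.log n)) →
    ∀ r : ℕ, |(r : ℝ) - (1 / 2) * Real.log n| ≤ 1 →
    (numIndep (blowup G r) : ℝ) ≤
      Real.exp ((1 + ε) * (1 + Real.log 2) *
        Real.sqrt ((r : ℝ) * n) * Real.log ((r : ℝ) * n)) := by
  intro ε hε
  -- with `1 + δ = √(1 + ε)` the bound on `α` reads `α ≤ √(2 (1 + ε) n log n)`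
  refine ⟨√(1 + ε) - 1, sub_pos.2 ((lt_sqrt zero_le_one).2 (by linarith)), ?_⟩
  obtain ⟨n₀, hn₀⟩ := eventually_atTop.1 <|
    ((tendsto_log_atTop.comp tendsto_natCast_atTop_atTop).eventually_ge_atTop (4 + 8 / ε)).and
      (eventually_mul_log_le (by positivity : 0 < 2 * (1 + ε)))
  refine ⟨n₀, fun n hn G _ _ hα r hr => ?_⟩
  obtain ⟨hL, hLn⟩ : 4 + 8 / ε ≤ log n ∧ 2 * (1 + ε) * log n ≤ n := hn₀ n hn
  have hL0 : 0 < log n := by linarith [div_pos (by norm_num : (0:ℝ) < 8) hε]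
  have hn0 : (0 : ℝ) < n := by
    rcases n.eq_zero_or_pos with rfl | hn
    · simp at hL0
    · exact_mod_cast hn
  set A := √(2 * (1 + ε) * n * log n)
  have hαA : (indepNum G : ℝ) ≤ A := by
    rwa [add_sub_cancel, ← sqrt_mul (by linarith), ← mul_assoc, ← mul_assoc,
      mul_comm (1 + ε)] at hα
  have hAn : A ≤ n := sqrt_le_iff.2 ⟨hn0.le, by nlinarith⟩
  calc (numIndep (blowup G r) : ℝ) ≤ exp (A * (1 + r * log 2 + log (n / A))) := by
        simpa using numIndep_blowup_le_exp G r hαA (by simpa using hAn)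
    _ ≤ _ := exp_le_exp.2 <| mul_one_add_log_div_le_sqrt_mul_log hε hn0 hL hr
        (sqrt_nonneg _) (sq_sqrt (by positivity))
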